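/- arXiv:1706.04003 — 2 statements merged into one kernel-verified Lean document; each statement's English description precedes it below -/
import Mathlib

section
/- Let F be a Parseval continuous frame for H (i.e. a continuous frame with bounds A = B = 1) and let G be a Bessel mapping. Assume there exist constants λ, γ ≥ 0 with λ + γ < 1 such that ‖T_F φ − T_G φ‖ ≤ λ‖T_F φ‖ + γ‖φ‖_{L²} for all φ ∈ L²(Ω, μ). Then ‖I_H − T_G T_F*‖ < 1, i.e. F and G are approximately dual continuous frames. -/
open MeasureTheory
open scoped ENNReal

noncomputable section

variable {H : Type*} [NormedAddCommGroup H] [InnerProductSpace ℂ H] [CompleteSpace H]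
variable {Ω : Type*} [MeasurableSpace Ω]

/-- A map `F : Ω → H` is weakly measurable if `ω ↦ ⟨f, F ω⟩` is measurable for every `f ∈ H`. -/
def WeaklyMeasurableMap (F : Ω → H) : Prop :=
  ∀ f : H, Measurable fun ω => (inner ℂ f (F ω) : ℂ)

/-- `F` is a Bessel mapping for `H` with respect to `(Ω, μ)` with Bessel bound `B`:
it is weakly measurable and `∫ |⟨f, F ω⟩|² dμ ≤ B ‖f‖²` for all `f`. -/
def IsBesselMapping (μ : Measure Ω) (F : Ω → H) (B : ℝ) : Prop :=
  WeaklyMeasurableMap F ∧ ∀ f : H, ∫ ω, ‖(inner ℂ f (F ω) : ℂ)‖ ^ 2 ∂μ ≤ B * ‖f‖ ^ 2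

/-- `F` is a continuous frame for `H` with respect to `(Ω, μ)` with bounds `0 < A ≤ B`. -/
def IsContinuousFrame (μ : Measure Ω) (F : Ω → H) (A B : ℝ) : Prop :=
  WeaklyMeasurableMap F ∧ 0 < A ∧ A ≤ B ∧
    ∀ f : H, A * ‖f‖ ^ 2 ≤ ∫ ω, ‖(inner ℂ f (F ω) : ℂ)‖ ^ 2 ∂μ ∧
      ∫ ω, ‖(inner ℂ f (F ω) : ℂ)‖ ^ 2 ∂μ ≤ B * ‖f‖ ^ 2

/-- `T` is the synthesis operator of the Bessel mapping `F`: its adjoint (the analysis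
operator) satisfies `(T* f)(ω) = ⟨f, F ω⟩` for `μ`-a.e. `ω`, for every `f ∈ H`. -/
def IsSynthesisOperator (μ : Measure Ω) (F : Ω → H) (T : Lp ℂ 2 μ →L[ℂ] H) : Prop :=
  ∀ f : H, (ContinuousLinearMap.adjoint T f : Ω → ℂ) =ᵐ[μ] fun ω => (inner ℂ f (F ω) : ℂ)

/-! The analysis operator `T_F*` of a Parseval frame is an isometry, so `T_F T_F* = I`. Applying the
perturbation bound to `φ = T_F* f` then gives `‖f - T_G T_F* f‖ ≤ (λ + γ) ‖f‖`. -/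

theorem MeasureTheory.L2.norm_sq_eq_integral_norm_sq {𝕜 E : Type*} [RCLike 𝕜] [NormedAddCommGroup E]
    [InnerProductSpace 𝕜 E] {μ : Measure Ω} (g : Lp E 2 μ) :
    ‖g‖ ^ 2 = ∫ ω, ‖g ω‖ ^ 2 ∂μ := by
  rw [← inner_self_eq_norm_sq (𝕜 := 𝕜), L2.inner_def, ← integral_re (L2.integrable_inner g g)]
  simp only [inner_self_eq_norm_sq]

theorem IsSynthesisOperator.norm_adjoint_apply_sq {μ : Measure Ω} {F : Ω → H}
    {T : Lp ℂ 2 μ →L[ℂ] H} (hT : IsSynthesisOperator μ F T) (f : H) :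
    ‖ContinuousLinearMap.adjoint T f‖ ^ 2 = ∫ ω, ‖(inner ℂ f (F ω) : ℂ)‖ ^ 2 ∂μ := by
  rw [L2.norm_sq_eq_integral_norm_sq (𝕜 := ℂ)]
  refine integral_congr_ae ?_
  filter_upwards [hT f] with ω hω
  rw [hω]

theorem ContinuousLinearMap.norm_one_sub_comp_adjoint_le {𝕜 E K : Type*} [RCLike 𝕜]
    [NormedAddCommGroup E] [InnerProductSpace 𝕜 E] [CompleteSpace E]
    [NormedAddCommGroup K] [InnerProductSpace 𝕜 K] [CompleteSpace K]
    {U V : K →L[𝕜] E} (hU : ∀ f, ‖adjoint U f‖ = ‖f‖) {lam gam : ℝ} (hnonneg : 0 ≤ lam + gam)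
    (hpert : ∀ φ, ‖U φ - V φ‖ ≤ lam * ‖U φ‖ + gam * ‖φ‖) :
    ‖1 - V ∘L adjoint U‖ ≤ lam + gam := by
  have hUU : U ∘L adjoint U = 1 := by
    simpa only [adjoint_adjoint] using (norm_map_iff_adjoint_comp_self (adjoint U)).mp hU
  refine opNorm_le_bound _ hnonneg fun f => ?_
  have hf : U (adjoint U f) = f := by simpa using congr($hUU f)
  calc ‖(1 - V ∘L adjoint U) f‖ = ‖U (adjoint U f) - V (adjoint U f)‖ := by simp [hf]
    _ ≤ lam * ‖f‖ + gam * ‖f‖ := by simpa only [hf, hU] using hpert (adjoint U f)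
    _ = (lam + gam) * ‖f‖ := by ring

theorem statement17_general {μ : Measure Ω} (F : Ω → H)
    (hFParseval : ∀ f : H, ∫ ω, ‖(inner ℂ f (F ω) : ℂ)‖ ^ 2 ∂μ = ‖f‖ ^ 2)
    (TF TG : Lp ℂ 2 μ →L[ℂ] H)
    (hTF : IsSynthesisOperator μ F TF)
    (lam gam : ℝ) (hlam : 0 ≤ lam) (hgam : 0 ≤ gam) (hsum : lam + gam < 1)
    (hpert : ∀ φ : Lp ℂ 2 μ, ‖TF φ - TG φ‖ ≤ lam * ‖TF φ‖ + gam * ‖φ‖) :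
    ‖(1 : H →L[ℂ] H) - TG ∘L ContinuousLinearMap.adjoint TF‖ < 1 := by
  have hiso : ∀ f : H, ‖ContinuousLinearMap.adjoint TF f‖ = ‖f‖ := fun f => by
    rw [← sq_eq_sq₀ (norm_nonneg _) (norm_nonneg _), hTF.norm_adjoint_apply_sq, hFParseval]
  exact (ContinuousLinearMap.norm_one_sub_comp_adjoint_le hiso (by linarith) hpert).trans_lt hsum

/-- if `F` is a Parseval continuous frame, `G` a Bessel mapping, and
`‖T_F φ - T_G φ‖ ≤ λ ‖T_F φ‖ + γ ‖φ‖₂` for all `φ ∈ L²` with `λ + γ < 1`, then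
`‖I - T_G T_F*‖ < 1`, i.e. `F` and `G` are approximately dual continuous frames. -/
theorem statement17 {μ : Measure Ω} (F G : Ω → H) (B_G : ℝ)
    (hFmeas : WeaklyMeasurableMap F)
    (hFParseval : ∀ f : H, ∫ ω, ‖(inner ℂ f (F ω) : ℂ)‖ ^ 2 ∂μ = ‖f‖ ^ 2)
    (hG : IsBesselMapping μ G B_G)
    (TF TG : Lp ℂ 2 μ →L[ℂ] H)
    (hTF : IsSynthesisOperator μ F TF) (hTG : IsSynthesisOperator μ G TG)
    (lam gam : ℝ) (hlam : 0 ≤ lam) (hgam : 0 ≤ gam) (hsum : lam + gam < 1)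
    (hpert : ∀ φ : Lp ℂ 2 μ, ‖TF φ - TG φ‖ ≤ lam * ‖TF φ‖ + gam * ‖φ‖) :
    ‖(1 : H →L[ℂ] H) - TG ∘L ContinuousLinearMap.adjoint TF‖ < 1 :=
  statement17_general F hFParseval TF TG hTF lam gam hlam hgam hsum hpert
end
end

section
/- Let F, G and K be Bessel mappings, with B_G a Bessel bound of G, and let λ > 0 satisfy λ·B_G < 1. Assume ∫_Ω |⟨f, F(ω) − K(ω)⟩|² dμ(ω) ≤ λ‖f‖² for all f ∈ H and that (F, G) is a dual pair for H (T_G T_F* = I_H). Then ‖I_H − T_G T_K*‖ ≤ √(λ·B_G) < 1, i.e. G and K are approximately dual continuous frames. -/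
open MeasureTheory
open scoped ENNReal

noncomputable section

variable {H : Type*} [NormedAddCommGroup H] [InnerProductSpace ℂ H] [CompleteSpace H]
variable {Ω : Type*} [MeasurableSpace Ω]

/-
Since `T_G T_F* = I`, we have `I - T_G T_K* = T_G (T_F - T_K)*`, and `T_F - T_K` is the synthesis
operator of `F - K`. Both analysis operators are controlled by their square-integral bounds:
`‖T_G‖ = ‖T_G*‖ ≤ √B_G` and `‖(T_F - T_K)*‖ ≤ √λ`, so `‖I - T_G T_K*‖ ≤ √B_G √λ ≤ √(λ B_G)`.
-/

theorem MeasureTheory.L2.norm_sq_eq_integral {𝕜 E : Type*} [RCLike 𝕜] [NormedAddCommGroup E]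
    [InnerProductSpace 𝕜 E] {μ : Measure Ω} (φ : Lp E 2 μ) :
    ‖φ‖ ^ 2 = ∫ ω, ‖φ ω‖ ^ 2 ∂μ := by
  rw [norm_sq_eq_re_inner (𝕜 := 𝕜), L2.inner_def, ← integral_re (L2.integrable_inner φ φ)]
  simp only [← norm_sq_eq_re_inner]

theorem ContinuousLinearMap.opNorm_le_sqrt_of_norm_sq_le {𝕜 E F : Type*} [RCLike 𝕜]
    [NormedAddCommGroup E] [NormedSpace 𝕜 E] [NormedAddCommGroup F] [NormedSpace 𝕜 F]
    (A : E →L[𝕜] F) {c : ℝ} (hA : ∀ x, ‖A x‖ ^ 2 ≤ c * ‖x‖ ^ 2) : ‖A‖ ≤ √c := by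
  refine A.opNorm_le_bound (Real.sqrt_nonneg c) fun x => ?_
  calc ‖A x‖ = √(‖A x‖ ^ 2) := (Real.sqrt_sq (norm_nonneg _)).symm
    _ ≤ √(c * ‖x‖ ^ 2) := Real.sqrt_le_sqrt (hA x)
    _ = √c * ‖x‖ := by rw [Real.sqrt_mul' c (by positivity), Real.sqrt_sq (norm_nonneg x)]

theorem Real.sqrt_mul_sqrt_le_sqrt_mul (x y : ℝ) : √x * √y ≤ √(x * y) := by
  rcases le_or_gt 0 x with hx | hx
  · rw [Real.sqrt_mul hx]
  · rw [Real.sqrt_eq_zero_of_nonpos hx.le, zero_mul]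
    exact Real.sqrt_nonneg _

namespace IsSynthesisOperator

variable {μ : Measure Ω} {F K : Ω → H} {T S : Lp ℂ 2 μ →L[ℂ] H}

theorem sub (hT : IsSynthesisOperator μ F T) (hS : IsSynthesisOperator μ K S) :
    IsSynthesisOperator μ (F - K) (T - S) := fun f => by
  filter_upwards [hT f, hS f, Lp.coeFn_sub (T.adjoint f) (S.adjoint f)] with ω hTω hSω hsub
  simp only [map_sub, FunLike.coe_sub, Pi.sub_apply, hsub, hTω, hSω, inner_sub_right]

theorem norm_adjoint_apply_sq_s18 (hT : IsSynthesisOperator μ F T) (f : H) :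
    ‖T.adjoint f‖ ^ 2 = ∫ ω, ‖(inner ℂ f (F ω) : ℂ)‖ ^ 2 ∂μ := by
  rw [L2.norm_sq_eq_integral (𝕜 := ℂ)]
  exact integral_congr_ae ((hT f).mono fun ω hω => by simp only [hω])

theorem norm_le_sqrt (hT : IsSynthesisOperator μ F T) {B : ℝ}
    (hF : ∀ f : H, ∫ ω, ‖(inner ℂ f (F ω) : ℂ)‖ ^ 2 ∂μ ≤ B * ‖f‖ ^ 2) : ‖T‖ ≤ √B := by
  rw [← LinearIsometryEquiv.norm_map ContinuousLinearMap.adjoint T]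
  exact T.adjoint.opNorm_le_sqrt_of_norm_sq_le fun f => hT.norm_adjoint_apply_sq_s18 f ▸ hF f

end IsSynthesisOperator

theorem statement18_general {μ : Measure Ω} (F G K : Ω → H) (B_G : ℝ)
    (hG : IsBesselMapping μ G B_G)
    (TF TG TK : Lp ℂ 2 μ →L[ℂ] H)
    (hTF : IsSynthesisOperator μ F TF) (hTG : IsSynthesisOperator μ G TG)
    (hTK : IsSynthesisOperator μ K TK)
    (lam : ℝ) (hlamB : lam * B_G < 1)
    (hpert : ∀ f : H, ∫ ω, ‖(inner ℂ f (F ω - K ω) : ℂ)‖ ^ 2 ∂μ ≤ lam * ‖f‖ ^ 2)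
    (hdual : TG ∘L ContinuousLinearMap.adjoint TF = 1) :
    ‖(1 : H →L[ℂ] H) - TG ∘L ContinuousLinearMap.adjoint TK‖ ≤ Real.sqrt (lam * B_G) ∧
      Real.sqrt (lam * B_G) < 1 := by
  have hdiff : (1 : H →L[ℂ] H) - TG ∘L TK.adjoint = TG ∘L (TF - TK).adjoint := by
    rw [← hdual, map_sub, ContinuousLinearMap.comp_sub]
  refine ⟨?_, (Real.sqrt_lt' one_pos).mpr (by simpa using hlamB)⟩
  calc ‖(1 : H →L[ℂ] H) - TG ∘L TK.adjoint‖ = ‖TG ∘L (TF - TK).adjoint‖ := by rw [hdiff]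
    _ ≤ ‖TG‖ * ‖(TF - TK).adjoint‖ := TG.opNorm_comp_le _
    _ = ‖TG‖ * ‖TF - TK‖ := by rw [LinearIsometryEquiv.norm_map]
    _ ≤ √B_G * √lam :=
        mul_le_mul (hTG.norm_le_sqrt hG.2) ((hTF.sub hTK).norm_le_sqrt hpert)
          (norm_nonneg _) (Real.sqrt_nonneg _)
    _ ≤ √(lam * B_G) := by
        rw [mul_comm lam]
        exact Real.sqrt_mul_sqrt_le_sqrt_mul _ _

/-- if `F, G, K` are Bessel mappings with `B_G` a Bessel bound of `G`,
`λ B_G < 1`, `∫ |⟨f, F ω - K ω⟩|² dμ ≤ λ ‖f‖²` for all `f`, and `(F, G)` is a dual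
pair (`T_G T_F* = I`), then `‖I - T_G T_K*‖ ≤ √(λ B_G) < 1`, i.e. `G` and `K` are
approximately dual continuous frames. -/
theorem statement18 {μ : Measure Ω} (F G K : Ω → H) (B_F B_G B_K : ℝ)
    (hF : IsBesselMapping μ F B_F) (hG : IsBesselMapping μ G B_G)
    (hK : IsBesselMapping μ K B_K)
    (TF TG TK : Lp ℂ 2 μ →L[ℂ] H)
    (hTF : IsSynthesisOperator μ F TF) (hTG : IsSynthesisOperator μ G TG)
    (hTK : IsSynthesisOperator μ K TK)
    (lam : ℝ) (hlam : 0 < lam) (hlamB : lam * B_G < 1)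
    (hpert : ∀ f : H, ∫ ω, ‖(inner ℂ f (F ω - K ω) : ℂ)‖ ^ 2 ∂μ ≤ lam * ‖f‖ ^ 2)
    (hdual : TG ∘L ContinuousLinearMap.adjoint TF = 1) :
    ‖(1 : H →L[ℂ] H) - TG ∘L ContinuousLinearMap.adjoint TK‖ ≤ Real.sqrt (lam * B_G) ∧
      Real.sqrt (lam * B_G) < 1 :=
  statement18_general F G K B_G hG TF TG TK hTF hTG hTK lam hlamB hpert hdual
end
end
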